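/- arXiv:1311.3552 — 2 statements merged into one kernel-verified Lean document; each statement's English description precedes it below -/
import Mathlib

section
/- Let A be a P ≥ 0 times differentiable complex-valued function compactly supported in a finite interval [a,b], and suppose there exist quantities A₀ and A₁ such that for every non-negative integer ν ≤ P and every x ∈ [a,b], |A^{(ν)}(x)| ≪ A₀ A₁^{-ν}. Let B be a function which is real-valued on [a,b] and holomorphic throughout the complex domain consisting of all points at distance less than ϱ from the interval [a,b], and assume there exists a quantity B₁ with 0 < B₁ ≪ |B'(x)| for every x in that domain. Then ∫_a^b A(x) e(B(x)) dx ≪ A₀ (A₁ B₁)^{-P} (1 + A₁/ϱ)^P (b − a). -/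
/-!
Induction on `P`. Since `A e(B) = (A / (2πi B')) (e(B))'` and `A` vanishes at `a` and `b`, one
integration by parts turns `∫ A e(B)` into `-∫ (A / (2πi B'))' e(B)`. On `[a, b]` Cauchy's
estimate on discs of radius `A₁ < ϱ` gives `(1 / B')^{(j)} ≪ j! B₁⁻¹ A₁^{-j}`, so by Leibniz the
new amplitude satisfies the hypotheses with `P - 1` and `A₀ / (A₁ B₁)` in place of `P` and `A₀`;
for `P = 0` the trivial bound applies. In general one runs this with `A₁` shrunk to
`(A₁⁻¹ + ϱ⁻¹)⁻¹ < ϱ`, which costs the factor `(1 + A₁ / ϱ)^P`.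
-/

open Real Complex

noncomputable section

open Set Function Filter Topology MeasureTheory Metric
open scoped Nat

theorem iteratedDeriv_ofReal_comp {f : ℂ → ℂ} {U : Set ℂ} (hU : IsOpen U)
    (hf : DifferentiableOn ℂ f U) (n : ℕ) {x : ℝ} (hx : (x : ℂ) ∈ U) :
    iteratedDeriv n (fun t : ℝ => f t) x = iteratedDeriv n f x := by
  induction n generalizing x with
  | zero => simp
  | succ n ih =>
    have hev : iteratedDeriv n (fun t : ℝ => f t) =ᶠ[𝓝 x] fun t : ℝ => iteratedDeriv n f t := by
      filter_upwards [(hU.preimage continuous_ofReal).mem_nhds hx] with t ht using ih ht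
    have hdiff : DifferentiableAt ℂ (iteratedDeriv n f) x := by
      rw [iteratedDeriv_eq_iterate]
      exact ((hf.analyticOnNhd hU).iterated_deriv n x hx).differentiableAt
    rw [iteratedDeriv_succ, iteratedDeriv_succ, hev.deriv_eq,
      hdiff.hasDerivAt.comp_ofReal.deriv]

theorem norm_iteratedDeriv_ofReal_comp_le {f : ℂ → ℂ} {U : Set ℂ} (hU : IsOpen U)
    (hf : DifferentiableOn ℂ f U) {x : ℝ} {r M : ℝ} (hr : 0 < r)
    (hball : closedBall (x : ℂ) r ⊆ U) (hM : ∀ z ∈ closedBall (x : ℂ) r, ‖f z‖ ≤ M) (n : ℕ) :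
    ‖iteratedDeriv n (fun t : ℝ => f t) x‖ ≤ n ! * M * r⁻¹ ^ n := by
  rw [iteratedDeriv_ofReal_comp hU hf n (hball (mem_closedBall_self hr.le)), inv_pow,
    ← div_eq_mul_inv]
  exact Complex.norm_iteratedDeriv_le_of_forall_mem_sphere_norm_le n hr
    (hf.diffContOnCl_ball hball) fun z hz => hM z (sphere_subset_closedBall hz)

theorem norm_iteratedDeriv_mul_le_of_isOpen {𝕜 R : Type*} [NontriviallyNormedField 𝕜]
    [NormedRing R] [NormedAlgebra 𝕜 R] {f g : 𝕜 → R} {s : Set 𝕜} {n : ℕ}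
    (hf : ContDiffOn 𝕜 n f s) (hg : ContDiffOn 𝕜 n g s) (hs : IsOpen s) {x : 𝕜} (hx : x ∈ s) :
    ‖iteratedDeriv n (fun y => f y * g y) x‖ ≤ ∑ i ∈ Finset.range (n + 1),
      (n.choose i : ℝ) * ‖iteratedDeriv i f x‖ * ‖iteratedDeriv (n - i) g x‖ := by
  simp only [← norm_iteratedFDeriv_eq_norm_iteratedDeriv, ← iteratedFDerivWithin_of_isOpen _ hs hx]
  exact norm_iteratedFDerivWithin_mul_le hf hg hs.uniqueDiffOn hx le_rfl

theorem norm_iteratedDeriv_mul_le_of_le {𝕜 R : Type*} [NontriviallyNormedField 𝕜]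
    [NormedRing R] [NormedAlgebra 𝕜 R] {f g : 𝕜 → R} {s : Set 𝕜} {n N : ℕ}
    (hf : ContDiffOn 𝕜 n f s) (hg : ContDiffOn 𝕜 n g s) (hs : IsOpen s) {x : 𝕜} (hx : x ∈ s)
    {α β u : ℝ} (hu : 0 ≤ u) (hnN : n ≤ N)
    (hfx : ∀ i ≤ n, ‖iteratedDeriv i f x‖ ≤ α * u ^ i)
    (hgx : ∀ j ≤ n, ‖iteratedDeriv j g x‖ ≤ j ! * β * u ^ j) :
    ‖iteratedDeriv n (fun y => f y * g y) x‖ ≤ (N + 1)! * α * β * u ^ n := by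
  have hα : 0 ≤ α := by simpa using (norm_nonneg _).trans (hfx 0 n.zero_le)
  have hβ : 0 ≤ β := by simpa using (norm_nonneg _).trans (hgx 0 n.zero_le)
  have hterm : ∀ i ∈ Finset.range (n + 1), (n.choose i : ℝ) * ‖iteratedDeriv i f x‖ *
      ‖iteratedDeriv (n - i) g x‖ ≤ n ! * (α * β * u ^ n) := by
    intro i hi
    have hin : i ≤ n := Nat.lt_succ_iff.mp (Finset.mem_range.mp hi)
    have hchoose : n.choose i * (n - i)! ≤ n ! := by
      rw [← Nat.factorial_mul_descFactorial hin, mul_comm]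
      exact Nat.mul_le_mul_left _ (Nat.choose_le_descFactorial n i)
    calc (n.choose i : ℝ) * ‖iteratedDeriv i f x‖ * ‖iteratedDeriv (n - i) g x‖
        ≤ n.choose i * (α * u ^ i) * ((n - i)! * β * u ^ (n - i)) := by
          gcongr
          exacts [hfx i hin, hgx _ (n.sub_le i)]
      _ = (n.choose i * (n - i)! : ℕ) * (α * β * u ^ n) := by
          rw [← Nat.add_sub_of_le hin, pow_add, Nat.add_sub_cancel_left]
          push_cast
          ring
      _ ≤ n ! * (α * β * u ^ n) := by gcongr
  calc ‖iteratedDeriv n (fun y => f y * g y) x‖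
      ≤ ∑ i ∈ Finset.range (n + 1), (n ! * (α * β * u ^ n) : ℝ) :=
        (norm_iteratedDeriv_mul_le_of_isOpen hf hg hs hx).trans (Finset.sum_le_sum hterm)
    _ = (n + 1)! * (α * β * u ^ n) := by
        rw [Finset.sum_const, Finset.card_range, nsmul_eq_mul, Nat.factorial_succ]
        push_cast
        ring
    _ ≤ (N + 1)! * (α * β * u ^ n) := by gcongr
    _ = (N + 1)! * α * β * u ^ n := by ring

theorem ContDiff.mul_of_tsupport_subset {𝕜 E R : Type*} [NontriviallyNormedField 𝕜]
    [NormedAddCommGroup E] [NormedSpace 𝕜 E] [NormedRing R] [NormedAlgebra 𝕜 R]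
    {f g : E → R} {U : Set E} {n : WithTop ℕ∞} (hf : ContDiff 𝕜 n f) (hg : ContDiffOn 𝕜 n g U)
    (hU : IsOpen U) (hfU : tsupport f ⊆ U) : ContDiff 𝕜 n fun x => f x * g x := by
  refine contDiff_iff_contDiffAt.2 fun x => ?_
  by_cases hx : x ∈ U
  · exact hf.contDiffAt.mul (hg.contDiffAt (hU.mem_nhds hx))
  · have hf0 : f =ᶠ[𝓝 x] 0 := notMem_tsupport_iff_eventuallyEq.1 fun h => hx (hfU h)
    exact (contDiffAt_const (c := (0 : R))).congr_of_eventuallyEq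
      (by filter_upwards [hf0] with y hy; simp [hy])

theorem Continuous.eq_zero_of_mem_frontier {X M : Type*} [TopologicalSpace X] [TopologicalSpace M]
    [Zero M] [T1Space M] {f : X → M} {s : Set X} (hf : Continuous f) (hs : support f ⊆ s)
    {x : X} (hx : x ∈ frontier s) : f x = 0 := by
  have hmaps : MapsTo f sᶜ {0} := fun y hy => notMem_support.1 fun h => hy (hs h)
  simpa using map_mem_closure hf (frontier_subset_closure (frontier_compl s ▸ hx)) hmaps

theorem intervalIntegral.integral_mul_deriv_cexp_eq_neg {u u' θ θ' : ℝ → ℂ} {a b : ℝ}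
    (hu : ∀ x ∈ uIcc a b, HasDerivAt u (u' x) x) (hθ : ∀ x ∈ uIcc a b, HasDerivAt θ (θ' x) x)
    (hu' : IntervalIntegrable u' volume a b) (hθ' : IntervalIntegrable θ' volume a b)
    (ha : u a = 0) (hb : u b = 0) :
    ∫ x in a..b, u x * (cexp (θ x) * θ' x) = -∫ x in a..b, u' x * cexp (θ x) := by
  have hexp : ContinuousOn (fun x => cexp (θ x)) (uIcc a b) := fun x hx =>
    (hθ x hx).cexp.continuousAt.continuousWithinAt
  rw [integral_mul_deriv_eq_deriv_mul hu (fun x hx => (hθ x hx).cexp) hu'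
    (hθ'.continuousOn_mul hexp), ha, hb]
  simp

theorem norm_integral_mul_cexp_le {A : ℝ → ℂ} {B : ℂ → ℂ} {a b M : ℝ} (hab : a ≤ b)
    (hB : ∀ x ∈ Icc a b, (B x).im = 0) (hA : ∀ x ∈ Icc a b, ‖A x‖ ≤ M) :
    ‖∫ x in a..b, A x * cexp (2 * π * I * B x)‖ ≤ M * (b - a) := by
  have hnorm : ∀ x ∈ uIoc a b, ‖A x * cexp (2 * π * I * B x)‖ ≤ M := fun x hx => by
    have hx' : x ∈ Icc a b := Ioc_subset_Icc_self (uIoc_of_le hab ▸ hx)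
    rw [norm_mul, norm_exp]
    simpa [hB x hx'] using hA x hx'
  simpa [abs_of_nonneg (sub_nonneg.2 hab)] using
    intervalIntegral.norm_integral_le_of_norm_le_const hnorm

namespace PartialIntegration

def nbhdIcc (a b ϱ : ℝ) : Set ℂ := {z : ℂ | ∃ x ∈ Icc a b, ‖z - (x : ℂ)‖ < ϱ}

structure IsAmplitude (P : ℕ) (a b c A₀ A₁ : ℝ) (A : ℝ → ℂ) : Prop where
  contDiff : ContDiff ℝ (P : ℕ∞) A
  support_subset : support A ⊆ Icc a b
  norm_iteratedDeriv_le : ∀ ν ≤ P, ∀ x ∈ Icc a b, ‖iteratedDeriv ν A x‖ ≤ c * A₀ * A₁⁻¹ ^ ν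

structure IsPhase (a b ϱ c B₁ : ℝ) (B : ℂ → ℂ) : Prop where
  im_eq_zero : ∀ x ∈ Icc a b, (B x).im = 0
  differentiableOn : DifferentiableOn ℂ B (nbhdIcc a b ϱ)
  le_norm_deriv : ∀ z ∈ nbhdIcc a b ϱ, B₁ ≤ c * ‖deriv B z‖

def nextAmplitude (A : ℝ → ℂ) (B : ℂ → ℂ) (t : ℝ) : ℂ :=
  -deriv (fun s : ℝ => A s * (2 * π * I * deriv B s)⁻¹) t

variable {a b ϱ c B₁ : ℝ} {B : ℂ → ℂ}

theorem isOpen_nbhdIcc : IsOpen (nbhdIcc a b ϱ) := by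
  have : nbhdIcc a b ϱ = ⋃ x ∈ Icc a b, ball (x : ℂ) ϱ := by
    ext z
    simp [nbhdIcc, Complex.dist_eq]
  rw [this]
  exact isOpen_biUnion fun _ _ => isOpen_ball

theorem closedBall_subset_nbhdIcc {x r : ℝ} (hx : x ∈ Icc a b) (hr : r < ϱ) :
    closedBall (x : ℂ) r ⊆ nbhdIcc a b ϱ :=
  fun _ hz => ⟨x, hx, (mem_closedBall_iff_norm.1 hz).trans_lt hr⟩

theorem ofReal_mem_nbhdIcc {x : ℝ} (hx : x ∈ Icc a b) (hϱ : 0 < ϱ) : (x : ℂ) ∈ nbhdIcc a b ϱ :=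
  closedBall_subset_nbhdIcc hx hϱ (mem_closedBall_self le_rfl)

namespace IsPhase

variable (hB : IsPhase a b ϱ c B₁ B) (hB₁ : 0 < B₁)
include hB hB₁

theorem deriv_ne_zero {z : ℂ} (hz : z ∈ nbhdIcc a b ϱ) : deriv B z ≠ 0 := by
  intro h
  have := hB.le_norm_deriv z hz
  simp [h] at this
  linarith

theorem norm_inv_le {z : ℂ} (hz : z ∈ nbhdIcc a b ϱ) : ‖(2 * π * I * deriv B z)⁻¹‖ ≤ c / B₁ := by
  have hBz := hB.le_norm_deriv z hz
  have hc : 0 < c := pos_of_mul_pos_left (hB₁.trans_le hBz) (norm_nonneg _)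
  have hnorm : 0 < ‖deriv B z‖ := norm_pos_iff.2 (hB.deriv_ne_zero hB₁ hz)
  rw [norm_inv, inv_le_comm₀ (by simp [hnorm]) (div_pos hc hB₁), inv_div,
    div_le_iff₀ hc]
  simp only [norm_mul, Complex.norm_ofNat, norm_real, norm_I, Real.norm_eq_abs,
    abs_of_pos pi_pos, mul_one]
  nlinarith [pi_gt_three]

theorem differentiableOn_inv :
    DifferentiableOn ℂ (fun z => (2 * π * I * deriv B z)⁻¹) (nbhdIcc a b ϱ) :=
  (((hB.differentiableOn.analyticOnNhd isOpen_nbhdIcc).deriv.differentiableOn).const_mul _).inv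
    fun _ hz => mul_ne_zero (by simp [pi_ne_zero]) (hB.deriv_ne_zero hB₁ hz)

theorem contDiffOn_inv {n : WithTop ℕ∞} :
    ContDiffOn ℝ n (fun t : ℝ => (2 * π * I * deriv B t)⁻¹) (ofReal ⁻¹' nbhdIcc a b ϱ) :=
  (((hB.differentiableOn_inv hB₁).analyticOnNhd isOpen_nbhdIcc).contDiffOn
    isOpen_nbhdIcc.uniqueDiffOn).restrict_scalars ℝ |>.comp ofRealCLM.contDiff.contDiffOn
      (mapsTo_preimage _ _)

theorem norm_iteratedDeriv_inv_le {x r : ℝ} (hx : x ∈ Icc a b) (hr : 0 < r) (hrϱ : r < ϱ)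
    (j : ℕ) :
    ‖iteratedDeriv j (fun t : ℝ => (2 * π * I * deriv B t)⁻¹) x‖ ≤ j ! * (c / B₁) * r⁻¹ ^ j :=
  norm_iteratedDeriv_ofReal_comp_le isOpen_nbhdIcc (hB.differentiableOn_inv hB₁) hr
    (closedBall_subset_nbhdIcc hx hrϱ)
    (fun _ hz => hB.norm_inv_le hB₁ (closedBall_subset_nbhdIcc hx hrϱ hz)) j

end IsPhase

variable {A : ℝ → ℂ}

theorem IsPhase.contDiff_mul_inv (hB : IsPhase a b ϱ c B₁ B) (hB₁ : 0 < B₁) (hϱ : 0 < ϱ)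
    {n : WithTop ℕ∞} (hA : ContDiff ℝ n A) (hAs : support A ⊆ Icc a b) :
    ContDiff ℝ n fun t => A t * (2 * π * I * deriv B t)⁻¹ :=
  hA.mul_of_tsupport_subset (hB.contDiffOn_inv hB₁) (isOpen_nbhdIcc.preimage continuous_ofReal)
    fun _ hx => ofReal_mem_nbhdIcc (isClosed_Icc.closure_subset_iff.2 hAs hx) hϱ

theorem IsPhase.integral_eq_integral_nextAmplitude (hB : IsPhase a b ϱ c B₁ B) (hB₁ : 0 < B₁)
    (hϱ : 0 < ϱ) (hab : a ≤ b) (hA : ContDiff ℝ 1 A) (hAs : support A ⊆ Icc a b) :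
    ∫ x in a..b, A x * cexp (2 * π * I * B x) =
      ∫ x in a..b, nextAmplitude A B x * cexp (2 * π * I * B x) := by
  set u := fun t => A t * (2 * π * I * deriv B t)⁻¹
  have hu : ContDiff ℝ 1 u := hB.contDiff_mul_inv hB₁ hϱ hA hAs
  have hmem : ∀ x ∈ uIcc a b, (x : ℂ) ∈ nbhdIcc a b ϱ := fun x hx =>
    ofReal_mem_nbhdIcc (uIcc_of_le hab ▸ hx) hϱ
  have hBan := hB.differentiableOn.analyticOnNhd isOpen_nbhdIcc
  have hθ : ∀ x ∈ uIcc a b, HasDerivAt (fun t : ℝ => 2 * π * I * B t)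
      (2 * π * I * deriv B x) x := fun x hx =>
    ((hBan x (hmem x hx)).differentiableAt.hasDerivAt.comp_ofReal).const_mul _
  have hθ' : IntervalIntegrable (fun t : ℝ => 2 * π * I * deriv B t) volume a b :=
    ((hBan.deriv.continuousOn.comp continuous_ofReal.continuousOn hmem).const_smul
      (2 * π * I)).intervalIntegrable
  have hAab : A a = 0 ∧ A b = 0 := by
    constructor <;> refine hA.continuous.eq_zero_of_mem_frontier hAs ?_ <;> simp [frontier_Icc hab]
  have hparts := intervalIntegral.integral_mul_deriv_cexp_eq_neg
    (fun x _ => (hu.differentiable one_ne_zero x).hasDerivAt) hθ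
    ((hu.continuous_deriv le_rfl).intervalIntegrable a b) hθ' (by simp [u, hAab.1])
    (by simp [u, hAab.2])
  calc ∫ x in a..b, A x * cexp (2 * π * I * B x)
      = ∫ x in a..b, u x * (cexp (2 * π * I * B x) * (2 * π * I * deriv B x)) := by
        refine intervalIntegral.integral_congr fun x hx => ?_
        have : (2 * π * I * deriv B x) ≠ 0 :=
          mul_ne_zero (by simp [pi_ne_zero]) (hB.deriv_ne_zero hB₁ (hmem x hx))
        simp only [u]
        rw [mul_comm (cexp _), ← mul_assoc, mul_assoc (A x), inv_mul_cancel₀ this, mul_one]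
    _ = ∫ x in a..b, nextAmplitude A B x * cexp (2 * π * I * B x) := by
        rw [hparts, ← intervalIntegral.integral_neg]
        simp only [nextAmplitude, neg_mul, u]

namespace IsAmplitude

variable {P : ℕ} {cA A₀ A₁ : ℝ}

theorem of_scale_le (hA : IsAmplitude P a b c A₀ A₁ A) {A₁' : ℝ} (hA₁' : 0 < A₁')
    (h : A₁' ≤ A₁) : IsAmplitude P a b c A₀ A₁' A where
  contDiff := hA.contDiff
  support_subset := hA.support_subset
  norm_iteratedDeriv_le ν hν x hx := by
    have hcA₀ : 0 ≤ c * A₀ := by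
      simpa using (norm_nonneg _).trans (hA.norm_iteratedDeriv_le 0 P.zero_le x hx)
    exact (hA.norm_iteratedDeriv_le ν hν x hx).trans <| mul_le_mul_of_nonneg_left
      (pow_le_pow_left₀ (inv_nonneg.2 (hA₁'.le.trans h)) (inv_anti₀ hA₁' h) ν) hcA₀

theorem nextAmplitude (hA : IsAmplitude (P + 1) a b cA A₀ A₁ A) (hB : IsPhase a b ϱ c B₁ B)
    (hA₁ : 0 < A₁) (hB₁ : 0 < B₁) (hA₁ϱ : A₁ < ϱ) :
    IsAmplitude P a b (cA * c * (P + 2)!) (A₀ * (A₁ * B₁)⁻¹) A₁ (nextAmplitude A B) := by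
  have hϱ : 0 < ϱ := hA₁.trans hA₁ϱ
  have hu := hB.contDiff_mul_inv hB₁ hϱ hA.contDiff hA.support_subset
  have hnext : PartialIntegration.nextAmplitude A B =
      -deriv fun s : ℝ => A s * (2 * π * I * deriv B s)⁻¹ := rfl
  refine ⟨?_, ?_, fun ν hν x hx => ?_⟩
  · rw [hnext]
    exact (hu.deriv' (n := (P : ℕ∞))).neg
  · rw [hnext, support_neg]
    exact support_deriv_subset.trans
      (tsupport_mul_subset_left.trans (isClosed_Icc.closure_subset_iff.2 hA.support_subset))
  · have hx' : x ∈ ofReal ⁻¹' nbhdIcc a b ϱ := ofReal_mem_nbhdIcc hx hϱ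
    have hleib := norm_iteratedDeriv_mul_le_of_le (N := P + 1)
      (hA.contDiff.contDiffOn.of_le (by exact_mod_cast Nat.succ_le_succ hν))
      (hB.contDiffOn_inv hB₁) (isOpen_nbhdIcc.preimage continuous_ofReal) hx'
      (inv_nonneg.2 hA₁.le) (Nat.succ_le_succ hν)
      (fun i hi => hA.norm_iteratedDeriv_le i (hi.trans (Nat.succ_le_succ hν)) x hx)
      (fun j _ => hB.norm_iteratedDeriv_inv_le hB₁ hx hA₁ hA₁ϱ j)
    rw [hnext, iteratedDeriv_neg, norm_neg, ← iteratedDeriv_succ']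
    refine hleib.trans_eq ?_
    rw [pow_succ]
    field_simp

end IsAmplitude

theorem exists_norm_integral_le (P : ℕ) (cA cB : ℝ) :
    ∃ C > 0, ∀ (a b A₀ A₁ B₁ ϱ : ℝ) (A : ℝ → ℂ) (B : ℂ → ℂ),
      a ≤ b → 0 ≤ A₀ → 0 < A₁ → 0 < B₁ → A₁ < ϱ →
      IsAmplitude P a b cA A₀ A₁ A → IsPhase a b ϱ cB B₁ B →
      ‖∫ x in a..b, A x * cexp (2 * π * I * B x)‖ ≤ C * A₀ * (A₁ * B₁)⁻¹ ^ P * (b - a) := by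
  induction P generalizing cA with
  | zero =>
    refine ⟨|cA| + 1, by positivity, fun a b A₀ A₁ B₁ ϱ A B hab hA₀ _ _ _ hA hB => ?_⟩
    refine (norm_integral_mul_cexp_le (M := cA * A₀) hab hB.im_eq_zero fun x hx => ?_).trans ?_
    · simpa using hA.norm_iteratedDeriv_le 0 le_rfl x hx
    · rw [pow_zero, mul_one]
      gcongr
      linarith [le_abs_self cA]
  | succ P ih =>
    obtain ⟨C, hC, hbound⟩ := ih (cA * cB * (P + 2)!)
    refine ⟨C, hC, fun a b A₀ A₁ B₁ ϱ A B hab hA₀ hA₁ hB₁ hA₁ϱ hA hB => ?_⟩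
    rw [hB.integral_eq_integral_nextAmplitude hB₁ (hA₁.trans hA₁ϱ) hab
      (hA.contDiff.of_le (by exact_mod_cast P.succ_pos)) hA.support_subset]
    refine (hbound a b _ A₁ B₁ ϱ _ B hab (by positivity) hA₁ hB₁ hA₁ϱ
      (hA.nextAmplitude hB hA₁ hB₁ hA₁ϱ) hB).trans_eq ?_
    ring

end PartialIntegration

/-- **Lemma 6** (partial integration, Jutila–Motohashi): if `A` is `P` times differentiable,
compactly supported in `[a,b]`, with `|A^{(ν)}| ≪ A₀ A₁^{-ν}` for `ν ≤ P`, and `B` is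
real-valued on `[a,b]`, holomorphic on the set of points within distance `ϱ` of `[a,b]`,
with `0 < B₁ ≪ |B'|` there, then
`∫_a^b A(x) e(B(x)) dx ≪ A₀ (A₁B₁)^{-P} (1 + A₁/ϱ)^P (b-a)`. -/
theorem partial_integration_lemma (P : ℕ) (cA cB : ℝ) :
    ∃ C > 0, ∀ (a b A₀ A₁ B₁ ϱ : ℝ) (A : ℝ → ℂ) (B : ℂ → ℂ),
      a ≤ b → 0 < A₀ → 0 < A₁ → 0 < B₁ → 0 < ϱ →
      -- `A` is `P ≥ 0` times differentiable and compactly supported in `[a,b]`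
      ContDiff ℝ (P : ℕ∞) A →
      Function.support A ⊆ Set.Icc a b →
      (∀ ν : ℕ, ν ≤ P → ∀ x ∈ Set.Icc a b, ‖iteratedDeriv ν A x‖ ≤ cA * A₀ * A₁ ^ (-(ν:ℝ))) →
      -- `B` is real-valued on `[a,b]` and holomorphic on all points within distance `ϱ`
      (∀ x ∈ Set.Icc a b, (B (x:ℂ)).im = 0) →
      DifferentiableOn ℂ B {z : ℂ | ∃ x ∈ Set.Icc a b, ‖z - (x:ℂ)‖ < ϱ} →
      -- `0 < B₁ ≪ |B'(z)|` on that domain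
      (∀ z ∈ {z : ℂ | ∃ x ∈ Set.Icc a b, ‖z - (x:ℂ)‖ < ϱ},
        B₁ ≤ cB * ‖deriv B z‖) →
      ‖∫ x in a..b, A x * Complex.exp (2*(π:ℂ)*Complex.I * B (x:ℂ))‖
        ≤ C * A₀ * (A₁ * B₁) ^ (-(P:ℝ)) * (1 + A₁/ϱ) ^ (P:ℝ) * (b - a) := by
  obtain ⟨C, hC, hmain⟩ := PartialIntegration.exists_norm_integral_le P cA cB
  refine ⟨C, hC, fun a b A₀ A₁ B₁ ϱ A B hab hA₀ hA₁ hB₁ hϱ hA hsupp hbound hBre hBdiff hB' => ?_⟩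
  set A₁' := (A₁⁻¹ + ϱ⁻¹)⁻¹
  have hA₁' : 0 < A₁' := by positivity
  have hA₁'A₁ : A₁' ≤ A₁ := inv_le_of_inv_le₀ hA₁ (le_add_of_nonneg_right (inv_nonneg.2 hϱ.le))
  have hA₁'ϱ : A₁' < ϱ := inv_lt_of_inv_lt₀ hϱ (lt_add_of_pos_left _ (inv_pos.2 hA₁))
  have hamp : PartialIntegration.IsAmplitude P a b cA A₀ A₁ A := ⟨hA, hsupp, fun ν hν x hx => by
    simpa [Real.rpow_neg hA₁.le, inv_pow] using hbound ν hν x hx⟩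
  have hscale : (A₁' * B₁)⁻¹ = (A₁ * B₁)⁻¹ * (1 + A₁ / ϱ) := by
    simp only [A₁', mul_inv, inv_inv]
    field_simp
  refine (hmain a b A₀ A₁' B₁ ϱ A B hab hA₀.le hA₁' hB₁ hA₁'ϱ (hamp.of_scale_le hA₁' hA₁'A₁)
    ⟨hBre, hBdiff, hB'⟩).trans_eq ?_
  rw [hscale, Real.rpow_neg (by positivity), Real.rpow_natCast, Real.rpow_natCast, mul_pow,
    inv_pow]
  ring
end
end

section
/- Let 1 ≤ m, n ≤ M with m ≠ n, and let T̃(x) denote either x or x+T (the same choice in both occurrences). Then for every non-negative integer P, ∫_M^{M+Δ} w(x) x^{1/2} e(±2√(n T̃(x))/k ∓ 2√(m T̃(x))/k) dx ≪_P k^P |√n − √m|^{-P} Δ^{1-P} M^{P/2 + 1/2}. -/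
open Real Complex Set Filter MeasureTheory intervalIntegral

noncomputable section


/-- Closed form for the iterated derivative of `(· + c) ^ p` on `Ioi 0`. -/
lemma rpow_shift_iter (c p : ℝ) (hc : 0 ≤ c) (e : ℕ) :
    Set.EqOn (iteratedDerivWithin e (fun y : ℝ => (y + c) ^ p) (Set.Ioi 0))
      (fun x => (∏ i ∈ Finset.range e, (p - i)) * (x + c) ^ (p - e)) (Set.Ioi 0) := by
  induction e with
  | zero => intro x hx; simp
  | succ e ih =>
    intro x hx
    have hopen : IsOpen (Set.Ioi (0:ℝ)) := isOpen_Ioi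
    have hxc : 0 < x + c := by have := hx.out; linarith
    rw [iteratedDerivWithin_succ, derivWithin_of_isOpen hopen hx]
    have h1 : (iteratedDerivWithin e (fun y : ℝ => (y + c) ^ p) (Set.Ioi 0)) =ᶠ[nhds x]
        (fun x => (∏ i ∈ Finset.range e, (p - i)) * (x + c) ^ (p - e)) :=
      Filter.eventuallyEq_iff_exists_mem.2 ⟨Set.Ioi 0, hopen.mem_nhds hx, ih⟩
    rw [h1.deriv_eq]
    have h2 : HasDerivAt (fun y : ℝ => (y + c) ^ (p - e))
        ((p - e) * (x + c) ^ (p - e - 1) * 1) x := by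
      exact (Real.hasDerivAt_rpow_const (Or.inl hxc.ne')).comp x
        ((hasDerivAt_id x).add_const c)
    have h3 := (h2.const_mul (∏ i ∈ Finset.range e, (p - i))).deriv
    rw [h3, Finset.prod_range_succ]
    push_cast
    have : p - (↑e + 1) = p - ↑e - 1 := by ring
    rw [this]; ring

/-- Bound for the iterated derivatives of `(· + c) ^ (1/2)` on `[M, M+Δ]`. -/
lemma rpow_shift_bound {M Δ c : ℝ} (hM : 1 ≤ M) (hΔ : 0 < Δ) (hΔM : Δ ≤ M) (hc : 0 ≤ c)
    (e : ℕ) {x : ℝ} (hx : x ∈ Set.Icc M (M + Δ)) :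
    |iteratedDerivWithin e (fun y : ℝ => (y + c) ^ ((1:ℝ)/2)) (Set.Ioi 0) x| ≤
      (Nat.factorial e : ℝ) * (M + Δ + c) ^ ((1:ℝ)/2) * Δ⁻¹ ^ e := by
  have hx0 : (0:ℝ) < x := lt_of_lt_of_le (by linarith) hx.1
  have hxc : 0 < x + c := by linarith
  rw [rpow_shift_iter c ((1:ℝ)/2) hc e hx0, abs_mul]
  have h1 : |∏ i ∈ Finset.range e, ((1:ℝ)/2 - i)| ≤ (Nat.factorial e : ℝ) := by
    rw [Finset.abs_prod]
    calc ∏ i ∈ Finset.range e, |((1:ℝ)/2 - i)| ≤ ∏ i ∈ Finset.range e, ((i:ℝ) + 1) := by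
          apply Finset.prod_le_prod (fun i _ => abs_nonneg _)
          intro i _
          rw [abs_le]
          constructor <;> push_cast <;> nlinarith [(Nat.cast_nonneg i : (0:ℝ) ≤ i)]
      _ = (Nat.factorial e : ℝ) := by
          rw [← Finset.prod_range_add_one_eq_factorial]
          push_cast; rfl
  have h2 : |(x + c) ^ ((1:ℝ)/2 - e)| ≤ (M + Δ + c) ^ ((1:ℝ)/2) * Δ⁻¹ ^ e := by
    rw [_root_.abs_of_nonneg (Real.rpow_nonneg hxc.le _)]
    have : (x + c) ^ ((1:ℝ)/2 - e) = (x + c) ^ ((1:ℝ)/2) * ((x + c) ^ e)⁻¹ := by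
      rw [sub_eq_add_neg, Real.rpow_add hxc, Real.rpow_neg hxc.le, Real.rpow_natCast]
    rw [this]
    apply mul_le_mul
    · exact Real.rpow_le_rpow hxc.le (by have := hx.2; linarith) (by norm_num)
    · rw [← inv_pow]
      apply pow_le_pow_left₀ (by positivity)
      rw [inv_le_inv₀ hxc hΔ]
      have := hx.1; linarith
    · positivity
    · positivity
  calc |∏ i ∈ Finset.range e, ((1:ℝ)/2 - i)| * |(x + c) ^ ((1:ℝ)/2 - e)|
      ≤ (Nat.factorial e : ℝ) * ((M + Δ + c) ^ ((1:ℝ)/2) * Δ⁻¹ ^ e) :=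
        mul_le_mul h1 h2 (abs_nonneg _) (by positivity)
    _ = (Nat.factorial e : ℝ) * (M + Δ + c) ^ ((1:ℝ)/2) * Δ⁻¹ ^ e := by ring

lemma deriv_zero_left {f : ℝ → ℂ} {x : ℝ} (hd : DifferentiableAt ℝ f x)
    (h0 : ∀ᶠ y in nhdsWithin x (Set.Iic x), f y = 0) (hx : f x = 0) : deriv f x = 0 := by
  have h1 : HasDerivWithinAt f (deriv f x) (Set.Iic x) x := hd.hasDerivAt.hasDerivWithinAt
  have h2 : HasDerivWithinAt f 0 (Set.Iic x) x :=
    (hasDerivWithinAt_const x (Set.Iic x) (0:ℂ)).congr_of_eventuallyEq h0 hx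
  exact (uniqueDiffOn_Iic x x self_mem_Iic).eq_deriv _ h1 h2

lemma deriv_zero_right {f : ℝ → ℂ} {x : ℝ} (hd : DifferentiableAt ℝ f x)
    (h0 : ∀ᶠ y in nhdsWithin x (Set.Ici x), f y = 0) (hx : f x = 0) : deriv f x = 0 := by
  have h1 : HasDerivWithinAt f (deriv f x) (Set.Ici x) x := hd.hasDerivAt.hasDerivWithinAt
  have h2 : HasDerivWithinAt f 0 (Set.Ici x) x :=
    (hasDerivWithinAt_const x (Set.Ici x) (0:ℂ)).congr_of_eventuallyEq h0 hx
  exact (uniqueDiffOn_Ici x x self_mem_Ici).eq_deriv _ h1 h2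

/-- Norm of iterated derivative of `ofReal ∘ f` equals that of `f`. -/
lemma norm_iter_ofReal {f : ℝ → ℝ} {s : Set ℝ} (hs : UniqueDiffOn ℝ s)
    (hf : ContDiffOn ℝ (⊤ : ℕ∞) f s) {x : ℝ} (hx : x ∈ s) (n : ℕ) :
    ‖iteratedDerivWithin n (fun y => ((f y : ℝ) : ℂ)) s x‖ =
      |iteratedDerivWithin n f s x| := by
  have h1 : (fun y => ((f y : ℝ) : ℂ)) = (Complex.ofRealLI ∘ f) := rfl
  rw [← norm_iteratedFDerivWithin_eq_norm_iteratedDerivWithin, h1,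
    Complex.ofRealLI.norm_iteratedFDerivWithin_comp_left (hf x hx) hs hx ((by exact_mod_cast le_top)),
    norm_iteratedFDerivWithin_eq_norm_iteratedDerivWithin, Real.norm_eq_abs]

/-- Leibniz-type bound. -/
lemma leibniz_bound {f g : ℝ → ℂ} {s : Set ℝ} (hs : UniqueDiffOn ℝ s)
    (hf : ContDiffOn ℝ (⊤ : ℕ∞) f s) (hg : ContDiffOn ℝ (⊤ : ℕ∞) g s) {x : ℝ} (hx : x ∈ s) (a : ℕ)
    (Bf Bg : ℕ → ℝ)
    (hBf : ∀ b, b ≤ a → ‖iteratedDerivWithin b f s x‖ ≤ Bf b)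
    (hBg : ∀ b, b ≤ a → ‖iteratedDerivWithin b g s x‖ ≤ Bg b) :
    ‖iteratedDerivWithin a (fun y => f y * g y) s x‖ ≤
      ∑ b ∈ Finset.range (a + 1), (a.choose b : ℝ) * Bf b * Bg (a - b) := by
  rw [← norm_iteratedFDerivWithin_eq_norm_iteratedDerivWithin]
  refine le_trans (norm_iteratedFDerivWithin_mul_le hf hg hs hx ((by exact_mod_cast le_top))) ?_
  apply Finset.sum_le_sum
  intro b hb
  have hb' : b ≤ a := Nat.lt_succ_iff.mp (Finset.mem_range.mp hb)
  have e1 : ‖iteratedFDerivWithin ℝ b f s x‖ ≤ Bf b := by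
    rw [norm_iteratedFDerivWithin_eq_norm_iteratedDerivWithin]; exact hBf b hb'
  have e2 : ‖iteratedFDerivWithin ℝ (a - b) g s x‖ ≤ Bg (a - b) := by
    rw [norm_iteratedFDerivWithin_eq_norm_iteratedDerivWithin]; exact hBg _ (Nat.sub_le a b)
  have hBf0 : 0 ≤ Bf b := le_trans (norm_nonneg _) (hBf b hb')
  have := mul_le_mul (mul_le_mul_of_nonneg_left e1 (by positivity : (0:ℝ) ≤ (a.choose b : ℝ)))
    e2 (norm_nonneg _) (mul_nonneg (by positivity) hBf0)
  calc (a.choose b : ℝ) * ‖iteratedFDerivWithin ℝ b f s x‖ * ‖iteratedFDerivWithin ℝ (a-b) g s x‖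
      ≤ (a.choose b : ℝ) * Bf b * Bg (a - b) := this

lemma contDiffOn_rpow_shift (c p : ℝ) (hc : 0 ≤ c) :
    ContDiffOn ℝ (⊤ : ℕ∞) (fun y : ℝ => (y + c) ^ p) (Set.Ioi 0) := by
  intro x hx
  have hxc : x + c ≠ 0 := by have := hx.out; positivity
  exact (ContDiffAt.comp x (Real.contDiffAt_rpow_const_of_ne hxc)
    ((contDiff_id.add contDiff_const).contDiffAt)).contDiffWithinAt

/-- transform of the constant sequence under one integration by parts -/
def Ntr (N : ℕ → ℝ) : ℕ → ℝ := fun a =>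
  ∑ b ∈ Finset.range (a + 2), ((a+1).choose b : ℝ) * N b * (Nat.factorial (a + 1 - b) : ℝ)

def FF : ℕ → (ℕ → ℝ) → ℝ
  | 0, N => N 0
  | P + 1, N => FF P (Ntr N)

lemma Ntr_nonneg {N : ℕ → ℝ} (hN : ∀ a, 0 ≤ N a) : ∀ a, 0 ≤ Ntr N a := by
  intro a
  apply Finset.sum_nonneg
  intro b _
  have := hN b
  positivity

lemma FF_nonneg : ∀ (P : ℕ) (N : ℕ → ℝ), (∀ a, 0 ≤ N a) → 0 ≤ FF P N
  | 0, N, hN => hN 0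
  | P + 1, N, hN => FF_nonneg P (Ntr N) (Ntr_nonneg hN)

/-- Key iterated integration by parts estimate. -/
lemma key (M Δ c σ : ℝ) (hM : 1 ≤ M) (hΔ : 0 < Δ) (hΔM : Δ ≤ M) (hc : 0 ≤ c) (hσ : σ ≠ 0) :
    ∀ (P : ℕ) (g : ℝ → ℂ) (A : ℝ) (N : ℕ → ℝ), 0 ≤ A →
    ContDiffOn ℝ (⊤ : ℕ∞) g (Set.Ioi 0) →
    (∀ x : ℝ, 0 < x → (x ≤ M ∨ M + Δ ≤ x) → g x = 0) →
    (∀ (a : ℕ), ∀ x ∈ Set.Icc M (M + Δ),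
        ‖iteratedDerivWithin a g (Set.Ioi 0) x‖ ≤ A * N a * Δ⁻¹ ^ a) →
    ‖∫ x in M..(M + Δ),
        g x * Complex.exp (Complex.I * (σ:ℂ) * (((x + c) ^ ((1:ℝ)/2) : ℝ) : ℂ))‖ ≤
      Δ * A * (2 * (M + Δ + c) ^ ((1:ℝ)/2) * |σ|⁻¹ * Δ⁻¹) ^ P * FF P N := by
  intro P
  induction P with
  | zero =>
    intro g A N hA hg hvan hbound
    rw [pow_zero]
    have hbound0 : ∀ x ∈ Set.uIoc M (M + Δ),
        ‖g x * Complex.exp (Complex.I * (σ:ℂ) * (((x + c) ^ ((1:ℝ)/2) : ℝ) : ℂ))‖ ≤ A * N 0 := by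
      intro x hx
      have hx' : x ∈ Set.Icc M (M + Δ) := by
        rw [Set.uIoc_of_le (by linarith : M ≤ M + Δ)] at hx
        exact ⟨hx.1.le, hx.2⟩
      have h1 := hbound 0 x hx'
      rw [iteratedDerivWithin_zero, pow_zero, mul_one] at h1
      rw [norm_mul]
      have h2 : ‖Complex.exp (Complex.I * (σ:ℂ) * (((x + c) ^ ((1:ℝ)/2) : ℝ) : ℂ))‖ = 1 := by
        rw [Complex.norm_exp]
        simp [Complex.mul_re]
      rw [h2, mul_one]
      exact h1
    calc ‖∫ x in M..(M + Δ),
        g x * Complex.exp (Complex.I * (σ:ℂ) * (((x + c) ^ ((1:ℝ)/2) : ℝ) : ℂ))‖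
        ≤ A * N 0 * |M + Δ - M| := intervalIntegral.norm_integral_le_of_norm_le_const hbound0
      _ = Δ * A * 1 * FF 0 N := by
          rw [show M + Δ - M = Δ by ring, abs_of_pos hΔ, FF]; ring
  | succ P ih =>
    intro g A N hA hg hvan hbound
    have hMpos : (0:ℝ) < M := by linarith
    have hopen : IsOpen (Set.Ioi (0:ℝ)) := isOpen_Ioi
    have hud : UniqueDiffOn ℝ (Set.Ioi (0:ℝ)) := hopen.uniqueDiffOn
    have hIcc : Set.Icc M (M + Δ) ⊆ Set.Ioi (0:ℝ) := fun x hx => lt_of_lt_of_le hMpos hx.1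
    set σC : ℂ := Complex.I * (σ:ℂ) with hσCdef
    have hσC0 : σC ≠ 0 := by
      simp only [hσCdef, mul_ne_zero_iff, Complex.ofReal_ne_zero]
      exact ⟨Complex.I_ne_zero, hσ⟩
    -- amplitude pieces
    have hrccd : ContDiffOn ℝ (⊤ : ℕ∞) (fun y : ℝ => (((y + c) ^ ((1:ℝ)/2) : ℝ) : ℂ)) (Set.Ioi 0) :=
      Complex.ofRealCLM.contDiff.comp_contDiffOn (contDiffOn_rpow_shift c _ hc)
    set h : ℝ → ℂ := fun y => g y * (((y + c) ^ ((1:ℝ)/2) : ℝ) : ℂ) with hhdef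
    have hhcd : ContDiffOn ℝ (⊤ : ℕ∞) h (Set.Ioi 0) := hg.mul hrccd
    have hdcd : ContDiffOn ℝ (⊤ : ℕ∞) (deriv h) (Set.Ioi 0) :=
      hhcd.deriv_of_isOpen hopen (by simp)
    set g1 : ℝ → ℂ := fun x => -(2 * σC⁻¹ * deriv h x) with hg1def
    have hvanh : ∀ x : ℝ, 0 < x → (x ≤ M ∨ M + Δ ≤ x) → h x = 0 := by
      intro x hx0 hside
      rw [hhdef]
      simp only [hvan x hx0 hside, zero_mul]
    -- Step 1 : integration by parts, ∫ g E = ∫ g1 E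
    set E : ℝ → ℂ := fun x => Complex.exp (σC * (((x + c) ^ ((1:ℝ)/2) : ℝ) : ℂ)) with hEdef
    have hstep : (∫ x in M..(M + Δ),
          g x * Complex.exp (Complex.I * (σ:ℂ) * (((x + c) ^ ((1:ℝ)/2) : ℝ) : ℂ)))
        = ∫ x in M..(M + Δ), g1 x * E x := by
      have hle : M ≤ M + Δ := by linarith
      have huIcc : Set.uIcc M (M + Δ) = Set.Icc M (M + Δ) := Set.uIcc_of_le hle
      set u : ℝ → ℂ := fun x => 2 * σC⁻¹ * h x with hudef
      set u' : ℝ → ℂ := fun x => 2 * σC⁻¹ * deriv h x with hu'def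
      set v' : ℝ → ℂ := fun x =>
        Complex.exp (σC * (((x + c) ^ ((1:ℝ)/2) : ℝ) : ℂ)) *
          (σC * ((((1:ℝ)/2 * (x + c) ^ ((1:ℝ)/2 - 1)) : ℝ) : ℂ)) with hv'def
      have hu : ∀ x ∈ Set.uIcc M (M + Δ), HasDerivAt u (u' x) x := by
        intro x hx
        have hxI : x ∈ Set.Ioi (0:ℝ) := hIcc (huIcc ▸ hx)
        have hdiff : DifferentiableAt ℝ h x :=
          ((hhcd.differentiableOn (by simp)) x hxI).differentiableAt (hopen.mem_nhds hxI)
        exact hdiff.hasDerivAt.const_mul (2 * σC⁻¹)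
      have hv : ∀ x ∈ Set.uIcc M (M + Δ), HasDerivAt E (v' x) x := by
        intro x hx
        have hxI : x ∈ Set.Ioi (0:ℝ) := hIcc (huIcc ▸ hx)
        have hxc : (0:ℝ) < x + c := by have := hxI.out; linarith
        have hφd : HasDerivAt (fun y : ℝ => (y + c) ^ ((1:ℝ)/2))
            ((1:ℝ)/2 * (x + c) ^ ((1:ℝ)/2 - 1)) x := by
          have := (Real.hasDerivAt_rpow_const (p := (1:ℝ)/2) (Or.inl hxc.ne')).comp x
            ((hasDerivAt_id x).add_const c)
          simpa [Function.comp_def] using this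
        have := ((hφd.ofReal_comp).const_mul σC).cexp
        simpa [hEdef, hv'def] using this
      have hu'int : IntervalIntegrable u' MeasureTheory.volume M (M + Δ) := by
        apply ContinuousOn.intervalIntegrable
        rw [huIcc]
        exact (continuousOn_const.mul
          ((hdcd.continuousOn).mono hIcc))
      have hv'int : IntervalIntegrable v' MeasureTheory.volume M (M + Δ) := by
        apply ContinuousOn.intervalIntegrable
        rw [huIcc]
        have hcont1 : ContinuousOn (fun x : ℝ => (x + c) ^ ((1:ℝ)/2)) (Set.Icc M (M + Δ)) :=
          ((contDiffOn_rpow_shift c ((1:ℝ)/2) hc).continuousOn).mono hIcc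
        have hcont2 : ContinuousOn (fun x : ℝ => (x + c) ^ ((1:ℝ)/2 - 1)) (Set.Icc M (M + Δ)) :=
          ((contDiffOn_rpow_shift c ((1:ℝ)/2 - 1) hc).continuousOn).mono hIcc
        apply ContinuousOn.mul
        · exact Complex.continuous_exp.comp_continuousOn
            (continuousOn_const.mul (Complex.continuous_ofReal.comp_continuousOn hcont1))
        · exact continuousOn_const.mul (Complex.continuous_ofReal.comp_continuousOn
            (continuousOn_const.mul hcont2))
      have hparts := intervalIntegral.integral_mul_deriv_eq_deriv_mul hu hv hu'int hv'int
      -- the original integrand equals u * v'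
      have hEq : Set.EqOn
          (fun x => g x * Complex.exp (Complex.I * (σ:ℂ) * (((x + c) ^ ((1:ℝ)/2) : ℝ) : ℂ)))
          (fun x => u x * v' x) (Set.uIcc M (M + Δ)) := by
        intro x hx
        have hxI : x ∈ Set.Ioi (0:ℝ) := hIcc (huIcc ▸ hx)
        have hxc : (0:ℝ) < x + c := by have := hxI.out; linarith
        have hrpow : (x + c) ^ ((1:ℝ)/2) * ((1:ℝ)/2 * (x + c) ^ ((1:ℝ)/2 - 1)) = 1/2 := by
          rw [show (x + c) ^ ((1:ℝ)/2) * ((1:ℝ)/2 * (x + c) ^ ((1:ℝ)/2 - 1))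
              = (1:ℝ)/2 * ((x + c) ^ ((1:ℝ)/2) * (x + c) ^ ((1:ℝ)/2 - 1)) by ring,
            ← Real.rpow_add hxc]
          norm_num
        simp only [hudef, hv'def, hhdef]
        have hca : ((( (x + c) ^ ((1:ℝ)/2) : ℝ)) : ℂ) *
            ((((1:ℝ)/2 * (x + c) ^ ((1:ℝ)/2 - 1)) : ℝ) : ℂ) = ((1:ℝ)/2 : ℝ) := by
          rw [← Complex.ofReal_mul, hrpow]
        have hinv : σC⁻¹ * σC = 1 := inv_mul_cancel₀ hσC0
        calc g x * Complex.exp (Complex.I * (σ:ℂ) * (((x + c) ^ ((1:ℝ)/2) : ℝ) : ℂ))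
            = g x * Complex.exp (σC * (((x + c) ^ ((1:ℝ)/2) : ℝ) : ℂ)) := by rw [hσCdef]
          _ = 2 * σC⁻¹ * (g x * (((x + c) ^ ((1:ℝ)/2) : ℝ) : ℂ)) *
              (Complex.exp (σC * (((x + c) ^ ((1:ℝ)/2) : ℝ) : ℂ)) *
                (σC * ((((1:ℝ)/2 * (x + c) ^ ((1:ℝ)/2 - 1)) : ℝ) : ℂ))) := by
              rw [show 2 * σC⁻¹ * (g x * (((x + c) ^ ((1:ℝ)/2) : ℝ) : ℂ)) *
                  (Complex.exp (σC * (((x + c) ^ ((1:ℝ)/2) : ℝ) : ℂ)) *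
                    (σC * ((((1:ℝ)/2 * (x + c) ^ ((1:ℝ)/2 - 1)) : ℝ) : ℂ)))
                = 2 * (σC⁻¹ * σC) *
                  ((((x + c) ^ ((1:ℝ)/2) : ℝ) : ℂ) *
                    ((((1:ℝ)/2 * (x + c) ^ ((1:ℝ)/2 - 1)) : ℝ) : ℂ)) *
                  (g x * Complex.exp (σC * (((x + c) ^ ((1:ℝ)/2) : ℝ) : ℂ))) by ring,
                hinv, hca]
              push_cast
              ring
      rw [intervalIntegral.integral_congr hEq, hparts]
      -- boundary terms vanish
      have hb1 : u M = 0 := by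
        simp only [hudef]
        rw [hvanh M hMpos (Or.inl le_rfl), mul_zero]
      have hb2 : u (M + Δ) = 0 := by
        simp only [hudef]
        rw [hvanh (M + Δ) (by linarith) (Or.inr le_rfl), mul_zero]
      rw [hb1, hb2, zero_mul, zero_mul, sub_zero, zero_sub]
      rw [← intervalIntegral.integral_neg]
      apply intervalIntegral.integral_congr
      intro x hx
      simp only [hg1def, hu'def, hEdef]
      ring
    rw [hstep]
    -- Step 2 : verify the hypotheses for g1 and apply the induction hypothesis
    set A' : ℝ := A * (2 * (M + Δ + c) ^ ((1:ℝ)/2) * |σ|⁻¹ * Δ⁻¹) with hA'def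
    have hA' : 0 ≤ A' := by
      have : (0:ℝ) ≤ (M + Δ + c) ^ ((1:ℝ)/2) := Real.rpow_nonneg (by linarith) _
      have h2 : (0:ℝ) ≤ |σ|⁻¹ := by positivity
      have h3 : (0:ℝ) ≤ Δ⁻¹ := by positivity
      rw [hA'def]; positivity
    have hg1cd : ContDiffOn ℝ (⊤ : ℕ∞) g1 (Set.Ioi 0) := (contDiffOn_const.mul hdcd).neg
    have hg1van : ∀ x : ℝ, 0 < x → (x ≤ M ∨ M + Δ ≤ x) → g1 x = 0 := by
      intro x hx0 hside
      have hD : deriv h x = 0 := by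
        rcases hside with hle | hge
        · rcases eq_or_lt_of_le hle with rfl | hlt
          · -- x = M : one-sided argument
            apply deriv_zero_left
            · exact ((hhcd.differentiableOn (by simp)) x hx0).differentiableAt
                (hopen.mem_nhds hx0)
            · have h1 : Set.Ioi (0:ℝ) ∈ nhdsWithin x (Set.Iic x) :=
                mem_nhdsWithin_of_mem_nhds (hopen.mem_nhds hx0)
              have h2 : ∀ᶠ y in nhdsWithin x (Set.Iic x), y ∈ Set.Iic x :=
                self_mem_nhdsWithin
              filter_upwards [h1, h2] with y hy1 hy2
              exact hvanh y hy1 (Or.inl hy2)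
            · exact hvanh x hx0 (Or.inl le_rfl)
          · -- x < M
            have hnb : Set.Ioo (0:ℝ) M ∈ nhds x := isOpen_Ioo.mem_nhds ⟨hx0, hlt⟩
            have heq : h =ᶠ[nhds x] (fun _ => (0:ℂ)) := by
              filter_upwards [hnb] with y hy
              exact hvanh y hy.1 (Or.inl hy.2.le)
            rw [heq.deriv_eq, deriv_const]
        · rcases eq_or_lt_of_le hge with rfl | hlt
          · -- x = M + Δ
            apply deriv_zero_right
            · exact ((hhcd.differentiableOn (by simp)) _ hx0).differentiableAt
                (hopen.mem_nhds hx0)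
            · have h2 : ∀ᶠ y in nhdsWithin (M+Δ) (Set.Ici (M+Δ)), y ∈ Set.Ici (M+Δ) :=
                self_mem_nhdsWithin
              filter_upwards [h2] with y hy2
              have hy' : M + Δ ≤ y := hy2
              exact hvanh y (by linarith) (Or.inr hy2)
            · exact hvanh _ hx0 (Or.inr le_rfl)
          · -- M + Δ < x
            have hnb : Set.Ioi (M+Δ) ∈ nhds x := isOpen_Ioi.mem_nhds hlt
            have heq : h =ᶠ[nhds x] (fun _ => (0:ℂ)) := by
              filter_upwards [hnb] with y hy
              exact hvanh y (by have := hy.out; linarith) (Or.inr (le_of_lt hy))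
            rw [heq.deriv_eq, deriv_const]
      rw [hg1def]
      simp [hD]
    have hg1bound : ∀ (a : ℕ), ∀ x ∈ Set.Icc M (M + Δ),
        ‖iteratedDerivWithin a g1 (Set.Ioi 0) x‖ ≤ A' * Ntr N a * Δ⁻¹ ^ a := by
      intro a x hx
      have hxI : x ∈ Set.Ioi (0:ℝ) := hIcc hx
      -- pull out the constant
      have hsmul : g1 = (-(2 * σC⁻¹)) • (deriv h) := by
        funext y
        simp only [hg1def, Pi.smul_apply, smul_eq_mul]
        ring
      have e0 : iteratedDerivWithin a g1 (Set.Ioi 0) x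
          = (-(2 * σC⁻¹)) • iteratedDerivWithin a (deriv h) (Set.Ioi 0) x := by
        rw [hsmul]
        exact iteratedDerivWithin_const_smul hxI hud _ ((hdcd.of_le (by exact_mod_cast le_top)) x hxI)
      -- replace deriv by derivWithin and shift the index
      have e1 : iteratedDerivWithin a (deriv h) (Set.Ioi 0) x
          = iteratedDerivWithin (a + 1) h (Set.Ioi 0) x := by
        rw [iteratedDerivWithin_succ']
        exact iteratedDerivWithin_congr
          (fun y hy => (derivWithin_of_isOpen hopen hy).symm) hxI
      -- Leibniz bound for the (a+1)-st derivative of h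
      have e2 : ‖iteratedDerivWithin (a + 1) h (Set.Ioi 0) x‖ ≤
          ∑ b ∈ Finset.range (a + 2), (((a+1).choose b : ℝ)) * (A * N b * Δ⁻¹ ^ b) *
            ((Nat.factorial (a + 1 - b) : ℝ) * (M + Δ + c) ^ ((1:ℝ)/2) * Δ⁻¹ ^ (a + 1 - b)) := by
        have := leibniz_bound hud hg hrccd hxI (a+1)
          (fun b => A * N b * Δ⁻¹ ^ b)
          (fun e => (Nat.factorial e : ℝ) * (M + Δ + c) ^ ((1:ℝ)/2) * Δ⁻¹ ^ e)
          (fun b _ => hbound b x hx)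
          (fun e _ => by
            rw [norm_iter_ofReal hud (contDiffOn_rpow_shift c _ hc) hxI]
            exact rpow_shift_bound hM hΔ hΔM hc e hx)
        exact this
      -- evaluate the sum
      have e3 : ∑ b ∈ Finset.range (a + 2), (((a+1).choose b : ℝ)) * (A * N b * Δ⁻¹ ^ b) *
            ((Nat.factorial (a + 1 - b) : ℝ) * (M + Δ + c) ^ ((1:ℝ)/2) * Δ⁻¹ ^ (a + 1 - b))
          = (A * (M + Δ + c) ^ ((1:ℝ)/2) * Δ⁻¹ ^ (a + 1)) * Ntr N a := by
        rw [Ntr, Finset.mul_sum]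
        apply Finset.sum_congr rfl
        intro b hb
        have hb' : b ≤ a + 1 := Nat.lt_succ_iff.mp (Finset.mem_range.mp hb)
        have hpow : Δ⁻¹ ^ b * Δ⁻¹ ^ (a + 1 - b) = Δ⁻¹ ^ (a + 1) := by
          rw [← pow_add, Nat.add_sub_cancel' hb']
        calc (((a+1).choose b : ℝ)) * (A * N b * Δ⁻¹ ^ b) *
              ((Nat.factorial (a + 1 - b) : ℝ) * (M + Δ + c) ^ ((1:ℝ)/2) * Δ⁻¹ ^ (a + 1 - b))
            = A * (M + Δ + c) ^ ((1:ℝ)/2) * (Δ⁻¹ ^ b * Δ⁻¹ ^ (a + 1 - b)) *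
              (((a+1).choose b : ℝ) * N b * (Nat.factorial (a + 1 - b) : ℝ)) := by ring
          _ = A * (M + Δ + c) ^ ((1:ℝ)/2) * Δ⁻¹ ^ (a + 1) *
              (((a+1).choose b : ℝ) * N b * (Nat.factorial (a + 1 - b) : ℝ)) := by rw [hpow]
      -- the constant in front
      have enorm : ‖-(2 * σC⁻¹)‖ = 2 * |σ|⁻¹ := by
        rw [norm_neg, norm_mul, norm_inv, hσCdef, norm_mul, Complex.norm_I, one_mul,
          Complex.norm_real, Real.norm_eq_abs]
        norm_num
      rw [e0, norm_smul, e1, enorm]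
      calc 2 * |σ|⁻¹ * ‖iteratedDerivWithin (a + 1) h (Set.Ioi 0) x‖
          ≤ 2 * |σ|⁻¹ * ((A * (M + Δ + c) ^ ((1:ℝ)/2) * Δ⁻¹ ^ (a + 1)) * Ntr N a) := by
            apply mul_le_mul_of_nonneg_left (le_trans e2 (le_of_eq e3)) (by positivity)
        _ = A' * Ntr N a * Δ⁻¹ ^ a := by
            rw [hA'def, pow_succ]
            ring
    have hfinal := ih g1 A' (Ntr N) hA' hg1cd hg1van hg1bound
    calc ‖∫ x in M..(M + Δ), g1 x * E x‖
        ≤ Δ * A' * (2 * (M + Δ + c) ^ ((1:ℝ)/2) * |σ|⁻¹ * Δ⁻¹) ^ P * FF P (Ntr N) := hfinal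
      _ = Δ * A * (2 * (M + Δ + c) ^ ((1:ℝ)/2) * |σ|⁻¹ * Δ⁻¹) ^ (P + 1) * FF (P+1) N := by
          rw [hA'def, FF, pow_succ]; ring

lemma norm_iterWithin_open_real {f : ℝ → ℝ} {s : Set ℝ} (hs : IsOpen s) {x : ℝ} (hx : x ∈ s)
    (n : ℕ) : |iteratedDerivWithin n f s x| = |iteratedDeriv n f x| := by
  rw [← Real.norm_eq_abs, ← Real.norm_eq_abs, ← norm_iteratedFDerivWithin_eq_norm_iteratedDerivWithin,
    iteratedFDerivWithin_of_isOpen n hs hx, norm_iteratedFDeriv_eq_norm_iteratedDeriv]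

lemma support_endpoints {w : ℝ → ℝ} (hw : Continuous w) {M D : ℝ} (hD : 0 < D)
    (hsupp : Function.support w ⊆ Set.Icc M (M + D)) :
    ∀ x : ℝ, (x ≤ M ∨ M + D ≤ x) → w x = 0 := by
  have hout : ∀ x : ℝ, (x < M ∨ M + D < x) → w x = 0 := by
    intro x hx
    by_contra hne
    have := hsupp (Function.mem_support.mpr hne)
    rcases hx with hx | hx
    · exact absurd this.1 (not_le.mpr hx)
    · exact absurd this.2 (not_le.mpr hx)
  intro x hx
  rcases hx with hx | hx
  · rcases eq_or_lt_of_le hx with rfl | hlt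
    · have h1 : Filter.Tendsto w (nhdsWithin x (Set.Iio x)) (nhds (w x)) :=
        (hw.continuousAt).continuousWithinAt
      have h2 : Filter.Tendsto w (nhdsWithin x (Set.Iio x)) (nhds 0) := by
        apply Filter.Tendsto.congr' _ tendsto_const_nhds
        filter_upwards [self_mem_nhdsWithin] with y hy
        exact (hout y (Or.inl hy)).symm
      exact tendsto_nhds_unique h1 h2
    · exact hout x (Or.inl hlt)
  · rcases eq_or_lt_of_le hx with rfl | hlt
    · have h1 : Filter.Tendsto w (nhdsWithin (M + D) (Set.Ioi (M + D))) (nhds (w (M + D))) :=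
        (hw.continuousAt).continuousWithinAt
      have h2 : Filter.Tendsto w (nhdsWithin (M + D) (Set.Ioi (M + D))) (nhds 0) := by
        apply Filter.Tendsto.congr' _ tendsto_const_nhds
        filter_upwards [self_mem_nhdsWithin] with y hy
        exact (hout y (Or.inr hy)).symm
      exact tendsto_nhds_unique h1 h2
    · exact hout x (Or.inr hlt)

set_option maxHeartbeats 1600000 in
/-- **Lemma 8** of Ernvall-Hytönen: for `1 ≤ m, n ≤ M`, `m ≠ n`, and `T̃(x)` equal to `x` or
`x + T` (the same choice in both occurrences),
`∫_M^{M+Δ} w(x) x^{1/2} e(±2√(nT̃(x))/k ∓ 2√(mT̃(x))/k) dx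
  ≪_P k^P |√n − √m|^{-P} Δ^{1-P} M^{P/2+1/2}`. -/
theorem integral_lemma_opposite_sign (P : ℕ) (δ : ℝ) (hδ : 1/2 < δ) (hδ1 : δ < 1)
    -- fixed comparison constants for `T ≍ M^δ` and for the derivatives of `w`
    (cT₁ cT₂ : ℝ) (hcT₁ : 0 < cT₁) (Cw : ℕ → ℝ) :
    ∃ C > 0, ∀ (M Δ T k : ℝ) (m n : ℕ) (w : ℝ → ℝ) (T' : ℝ → ℝ) (s : ℝ),
      1 ≤ M → 1 ≤ k → 0 < Δ → Δ ≤ M →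
      0 ≤ T → cT₁ * M ^ δ ≤ T → T ≤ cT₂ * M ^ δ →
      1 ≤ m → (m : ℝ) ≤ M → 1 ≤ n → (n : ℝ) ≤ M → m ≠ n →
      -- `w` is an infinitely differentiable weight supported on `[M, M+Δ]`
      ContDiff ℝ (⊤ : ℕ∞) w →
      Function.support w ⊆ Set.Icc M (M + Δ) →
      (∀ j : ℕ, ∀ x : ℝ, |iteratedDeriv j w x| ≤ Cw j * Δ ^ (-(j:ℝ))) →
      -- `T'` is `x ↦ x` or `x ↦ x + T`
      ((∀ x, T' x = x) ∨ (∀ x, T' x = x + T)) →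
      (s = 1 ∨ s = -1) →
      ‖∫ x in M..(M+Δ), (w x * x ^ ((1:ℝ)/2) : ℝ) *
          Complex.exp (2*(π:ℂ)*Complex.I *
            ((s * (2*Real.sqrt ((n:ℝ) * T' x)/k - 2*Real.sqrt ((m:ℝ) * T' x)/k) : ℝ) : ℂ))‖
        ≤ C * k ^ (P:ℝ) * |Real.sqrt n - Real.sqrt m| ^ (-(P:ℝ)) *
            Δ ^ (1 - (P:ℝ)) * M ^ ((P:ℝ)/2 + 1/2) := by
  set N₀ : ℕ → ℝ := fun a =>
    ∑ b ∈ Finset.range (a + 1), (a.choose b : ℝ) * |Cw b| * (Nat.factorial (a - b) : ℝ) with hN₀def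
  have hN₀ : ∀ a, 0 ≤ N₀ a := by
    intro a
    apply Finset.sum_nonneg
    intro b _
    positivity
  have hFF0 : 0 ≤ FF P N₀ := FF_nonneg P N₀ hN₀
  have hπ : (0:ℝ) < π := Real.pi_pos
  set C : ℝ := 2 ^ ((1:ℝ)/2) *
      (2 * (2 + |cT₂|) ^ ((1:ℝ)/2) * (4*π)⁻¹) ^ P * FF P N₀ + 1 with hCdef
  have hC0 : 0 < C := by
    have h1 : (0:ℝ) ≤ 2 ^ ((1:ℝ)/2) := Real.rpow_nonneg (by norm_num) _
    have h2 : (0:ℝ) ≤ (2 + |cT₂|) ^ ((1:ℝ)/2) := Real.rpow_nonneg (by positivity) _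
    have h3 : (0:ℝ) ≤ (2 * (2 + |cT₂|) ^ ((1:ℝ)/2) * (4*π)⁻¹) ^ P := by positivity
    have h4 : (0:ℝ) ≤ 2 ^ ((1:ℝ)/2) * (2 * (2 + |cT₂|) ^ ((1:ℝ)/2) * (4*π)⁻¹) ^ P * FF P N₀ :=
      mul_nonneg (mul_nonneg h1 h3) hFF0
    rw [hCdef]; linarith
  refine ⟨C, hC0, ?_⟩
  intro M Δ T k m n w T' s hM hk hΔ hΔM hT0 hT1 hT2 hm hmM hn hnM hmn hw hsupp hwder hT' hs
  have hMpos : (0:ℝ) < M := by linarith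
  have hkpos : (0:ℝ) < k := by linarith
  -- the shift constant
  obtain ⟨c, hc0, hcT', hcbd⟩ : ∃ c : ℝ, 0 ≤ c ∧ (∀ x, T' x = x + c) ∧ c ≤ |cT₂| * M := by
    rcases hT' with hT' | hT'
    · exact ⟨0, le_rfl, fun x => by rw [hT' x, add_zero], by positivity⟩
    · refine ⟨T, hT0, hT', ?_⟩
      have h1 : M ^ δ ≤ M := by
        calc M ^ δ ≤ M ^ (1:ℝ) := Real.rpow_le_rpow_of_exponent_le hM (le_of_lt hδ1)
          _ = M := Real.rpow_one M
      calc T ≤ cT₂ * M ^ δ := hT2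
        _ ≤ |cT₂| * M ^ δ := by
            apply mul_le_mul_of_nonneg_right (le_abs_self cT₂)
            positivity
        _ ≤ |cT₂| * M := by
            apply mul_le_mul_of_nonneg_left h1 (abs_nonneg cT₂)
  -- the frequency
  have hd0 : Real.sqrt n ≠ Real.sqrt m := by
    intro hcon
    apply hmn
    have h2 := (Real.sqrt_inj (Nat.cast_nonneg n) (Nat.cast_nonneg m)).mp hcon
    exact_mod_cast h2.symm
  set d : ℝ := Real.sqrt n - Real.sqrt m with hddef
  have hdne : d ≠ 0 := sub_ne_zero.mpr hd0
  have hdabs : 0 < |d| := abs_pos.mpr hdne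
  have hs1 : |s| = 1 := by rcases hs with rfl | rfl <;> simp
  set σ : ℝ := 4 * π * s * d / k with hσdef
  have hσ : σ ≠ 0 := by
    rw [hσdef]
    have hsne : s ≠ 0 := by rcases hs with rfl | rfl <;> norm_num
    positivity
  have hσabs : |σ| = 4 * π * |d| / k := by
    rw [hσdef, abs_div, abs_mul, abs_mul, abs_of_pos (by positivity : (0:ℝ) < 4*π), hs1,
      abs_of_pos hkpos]
    ring
  -- the amplitude
  set g₀ : ℝ → ℂ := fun x => ((w x * x ^ ((1:ℝ)/2) : ℝ) : ℂ) with hg₀def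
  have hg₀eq : g₀ = fun y => ((w y : ℝ) : ℂ) * (((y ^ ((1:ℝ)/2) : ℝ)) : ℂ) := by
    funext y
    rw [hg₀def]
    push_cast
    ring
  have hopen : IsOpen (Set.Ioi (0:ℝ)) := isOpen_Ioi
  have hud : UniqueDiffOn ℝ (Set.Ioi (0:ℝ)) := hopen.uniqueDiffOn
  have hIcc : Set.Icc M (M + Δ) ⊆ Set.Ioi (0:ℝ) := fun x hx => lt_of_lt_of_le hMpos hx.1
  have hpfun : (fun y : ℝ => y ^ ((1:ℝ)/2)) = (fun y : ℝ => (y + 0) ^ ((1:ℝ)/2)) := by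
    funext y; rw [add_zero]
  have hpcd : ContDiffOn ℝ (⊤ : ℕ∞) (fun y : ℝ => y ^ ((1:ℝ)/2)) (Set.Ioi 0) := by
    rw [hpfun]; exact contDiffOn_rpow_shift 0 _ le_rfl
  have hwcd : ContDiffOn ℝ (⊤ : ℕ∞) (fun y : ℝ => ((w y : ℝ) : ℂ)) (Set.Ioi 0) :=
    Complex.ofRealCLM.contDiff.comp_contDiffOn hw.contDiffOn
  have hg₀cd : ContDiffOn ℝ (⊤ : ℕ∞) g₀ (Set.Ioi 0) := by
    rw [hg₀eq]
    exact hwcd.mul (Complex.ofRealCLM.contDiff.comp_contDiffOn hpcd)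
  have hwend := support_endpoints hw.continuous hΔ hsupp
  have hg₀van : ∀ x : ℝ, 0 < x → (x ≤ M ∨ M + Δ ≤ x) → g₀ x = 0 := by
    intro x _ hside
    simp only [hg₀def]
    rw [hwend x hside]
    push_cast
    ring
  have hCw0 : ∀ j, 0 ≤ |Cw j| := fun j => abs_nonneg _
  have hg₀bound : ∀ (a : ℕ), ∀ x ∈ Set.Icc M (M + Δ),
      ‖iteratedDerivWithin a g₀ (Set.Ioi 0) x‖ ≤ ((M + Δ) ^ ((1:ℝ)/2)) * N₀ a * Δ⁻¹ ^ a := by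
    intro a x hx
    have hxI : x ∈ Set.Ioi (0:ℝ) := hIcc hx
    rw [hg₀eq]
    have hBf : ∀ b, b ≤ a → ‖iteratedDerivWithin b (fun y : ℝ => ((w y : ℝ) : ℂ)) (Set.Ioi 0) x‖
        ≤ |Cw b| * Δ⁻¹ ^ b := by
      intro b _
      rw [norm_iter_ofReal hud hw.contDiffOn hxI, norm_iterWithin_open_real hopen hxI]
      calc |iteratedDeriv b w x| ≤ Cw b * Δ ^ (-(b:ℝ)) := hwder b x
        _ = Cw b * Δ⁻¹ ^ b := by
            rw [Real.rpow_neg hΔ.le, Real.rpow_natCast, inv_pow]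
        _ ≤ |Cw b| * Δ⁻¹ ^ b := by
            apply mul_le_mul_of_nonneg_right (le_abs_self _) (by positivity)
    have hBg : ∀ e, e ≤ a →
        ‖iteratedDerivWithin e (fun y : ℝ => (((y ^ ((1:ℝ)/2) : ℝ)) : ℂ)) (Set.Ioi 0) x‖
        ≤ (Nat.factorial e : ℝ) * (M + Δ) ^ ((1:ℝ)/2) * Δ⁻¹ ^ e := by
      intro e _
      rw [norm_iter_ofReal hud hpcd hxI]
      have h2 := rpow_shift_bound hM hΔ hΔM (le_rfl : (0:ℝ) ≤ 0) e hx
      rw [add_zero (M + Δ)] at h2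
      calc |iteratedDerivWithin e (fun y : ℝ => y ^ ((1:ℝ)/2)) (Set.Ioi 0) x|
          = |iteratedDerivWithin e (fun y : ℝ => (y + 0) ^ ((1:ℝ)/2)) (Set.Ioi 0) x| := by
            rw [hpfun]
        _ ≤ (Nat.factorial e : ℝ) * (M + Δ) ^ ((1:ℝ)/2) * Δ⁻¹ ^ e := h2
    refine le_trans (leibniz_bound hud hwcd
      (Complex.ofRealCLM.contDiff.comp_contDiffOn hpcd) hxI a _ _ hBf hBg) ?_
    apply le_of_eq
    rw [hN₀def, Finset.mul_sum, Finset.sum_mul]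
    apply Finset.sum_congr rfl
    intro b hb
    have hb' : b ≤ a := Nat.lt_succ_iff.mp (Finset.mem_range.mp hb)
    have hpow : Δ⁻¹ ^ b * Δ⁻¹ ^ (a - b) = Δ⁻¹ ^ a := by
      rw [← pow_add, Nat.add_sub_cancel' hb']
    calc (a.choose b : ℝ) * (|Cw b| * Δ⁻¹ ^ b) *
          ((Nat.factorial (a - b) : ℝ) * (M + Δ) ^ ((1:ℝ)/2) * Δ⁻¹ ^ (a - b))
        = (M + Δ) ^ ((1:ℝ)/2) * (Δ⁻¹ ^ b * Δ⁻¹ ^ (a - b)) *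
          ((a.choose b : ℝ) * |Cw b| * (Nat.factorial (a - b) : ℝ)) := by ring
      _ = (M + Δ) ^ ((1:ℝ)/2) * ((a.choose b : ℝ) * |Cw b| * (Nat.factorial (a - b) : ℝ)) *
          Δ⁻¹ ^ a := by rw [hpow]; ring
  -- rewrite the integrand into the canonical oscillatory form
  have hstep : (∫ x in M..(M+Δ), (w x * x ^ ((1:ℝ)/2) : ℝ) *
          Complex.exp (2*(π:ℂ)*Complex.I *
            ((s * (2*Real.sqrt ((n:ℝ) * T' x)/k - 2*Real.sqrt ((m:ℝ) * T' x)/k) : ℝ) : ℂ)))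
      = ∫ x in M..(M + Δ),
          g₀ x * Complex.exp (Complex.I * (σ:ℂ) * (((x + c) ^ ((1:ℝ)/2) : ℝ) : ℂ)) := by
    apply intervalIntegral.integral_congr
    intro x hx
    have hxc : (0:ℝ) ≤ x + c := by
      rw [Set.uIcc_of_le (by linarith : M ≤ M + Δ)] at hx
      have := hx.1
      linarith
    have hphase : 2 * π * (s * (2*Real.sqrt ((n:ℝ) * T' x)/k - 2*Real.sqrt ((m:ℝ) * T' x)/k))
        = σ * ((x + c) ^ ((1:ℝ)/2)) := by
      rw [hcT' x, Real.sqrt_mul (Nat.cast_nonneg n), Real.sqrt_mul (Nat.cast_nonneg m),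
        ← Real.sqrt_eq_rpow, hσdef, hddef]
      field_simp
      ring
    have hcast : (2*(π:ℂ)*Complex.I *
          ((s * (2*Real.sqrt ((n:ℝ) * T' x)/k - 2*Real.sqrt ((m:ℝ) * T' x)/k) : ℝ) : ℂ))
        = Complex.I * (σ:ℂ) * (((x + c) ^ ((1:ℝ)/2) : ℝ) : ℂ) := by
      calc 2*(π:ℂ)*Complex.I *
            ((s * (2*Real.sqrt ((n:ℝ) * T' x)/k - 2*Real.sqrt ((m:ℝ) * T' x)/k) : ℝ) : ℂ)
          = Complex.I * ((2 * π * (s * (2*Real.sqrt ((n:ℝ) * T' x)/k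
              - 2*Real.sqrt ((m:ℝ) * T' x)/k)) : ℝ) : ℂ) := by
            push_cast
            ring
        _ = Complex.I * ((σ * ((x + c) ^ ((1:ℝ)/2)) : ℝ) : ℂ) := by rw [hphase]
        _ = Complex.I * (σ:ℂ) * (((x + c) ^ ((1:ℝ)/2) : ℝ) : ℂ) := by
            push_cast
            ring
    simp only [hg₀def]
    rw [hcast]
  rw [hstep]
  have hkey := key M Δ c σ hM hΔ hΔM hc0 hσ P g₀ ((M + Δ) ^ ((1:ℝ)/2)) N₀
    (Real.rpow_nonneg (by linarith) _) hg₀cd hg₀van hg₀bound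
  refine le_trans hkey ?_
  -- final arithmetic
  have hσinv : |σ|⁻¹ = k * (4*π)⁻¹ * |d|⁻¹ := by
    rw [hσabs]
    field_simp
  have h1 : (M + Δ) ^ ((1:ℝ)/2) ≤ 2 ^ ((1:ℝ)/2) * M ^ ((1:ℝ)/2) := by
    rw [← Real.mul_rpow (by norm_num) hMpos.le]
    exact Real.rpow_le_rpow (by linarith) (by linarith) (by norm_num)
  have h2 : (M + Δ + c) ^ ((1:ℝ)/2) ≤ (2 + |cT₂|) ^ ((1:ℝ)/2) * M ^ ((1:ℝ)/2) := by
    rw [← Real.mul_rpow (by positivity) hMpos.le]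
    apply Real.rpow_le_rpow (by linarith) ?_ (by norm_num)
    nlinarith [abs_nonneg cT₂]
  set β' : ℝ := (2 * (2 + |cT₂|) ^ ((1:ℝ)/2) * (4*π)⁻¹) *
      (M ^ ((1:ℝ)/2) * k * |d|⁻¹ * Δ⁻¹) with hβ'def
  have hβ : 2 * (M + Δ + c) ^ ((1:ℝ)/2) * |σ|⁻¹ * Δ⁻¹ ≤ β' := by
    rw [hσinv, hβ'def]
    have : 2 * (M + Δ + c) ^ ((1:ℝ)/2) * (k * (4*π)⁻¹ * |d|⁻¹) * Δ⁻¹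
        ≤ 2 * ((2 + |cT₂|) ^ ((1:ℝ)/2) * M ^ ((1:ℝ)/2)) * (k * (4*π)⁻¹ * |d|⁻¹) * Δ⁻¹ := by
      have hf : (0:ℝ) ≤ k * (4*π)⁻¹ * |d|⁻¹ := by positivity
      have hf2 : (0:ℝ) ≤ Δ⁻¹ := by positivity
      apply mul_le_mul_of_nonneg_right _ hf2
      apply mul_le_mul_of_nonneg_right _ hf
      apply mul_le_mul_of_nonneg_left h2 (by norm_num)
    refine le_trans this (le_of_eq ?_)
    ring
  have hβ0 : (0:ℝ) ≤ 2 * (M + Δ + c) ^ ((1:ℝ)/2) * |σ|⁻¹ * Δ⁻¹ := by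
    have : (0:ℝ) ≤ (M + Δ + c) ^ ((1:ℝ)/2) := Real.rpow_nonneg (by linarith) _
    positivity
  have hpowβ : (2 * (M + Δ + c) ^ ((1:ℝ)/2) * |σ|⁻¹ * Δ⁻¹) ^ P ≤ β' ^ P :=
    pow_le_pow_left₀ hβ0 hβ P
  -- rewrite the right-hand side
  have hR1 : k ^ (P:ℝ) = k ^ P := Real.rpow_natCast k P
  have hR2 : |d| ^ (-(P:ℝ)) = (|d|⁻¹) ^ P := by
    rw [Real.rpow_neg (abs_nonneg d), Real.rpow_natCast, inv_pow]
  have hR3 : Δ ^ (1 - (P:ℝ)) = Δ * (Δ⁻¹) ^ P := by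
    rw [Real.rpow_sub hΔ, Real.rpow_one, Real.rpow_natCast, div_eq_mul_inv, inv_pow]
  have hR4 : M ^ ((P:ℝ)/2 + 1/2) = (M ^ ((1:ℝ)/2)) ^ P * M ^ ((1:ℝ)/2) := by
    rw [Real.rpow_add hMpos]
    congr 1
    conv_rhs => rw [← Real.rpow_natCast (M ^ ((1:ℝ)/2)) P, ← Real.rpow_mul hMpos.le]
    congr 1
    ring
  rw [hR1, hR2, hR3, hR4]
  have hprod0 : (0:ℝ) ≤ k ^ P * (|d|⁻¹) ^ P * (Δ * (Δ⁻¹) ^ P) *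
      ((M ^ ((1:ℝ)/2)) ^ P * M ^ ((1:ℝ)/2)) := by
    have : (0:ℝ) ≤ M ^ ((1:ℝ)/2) := Real.rpow_nonneg hMpos.le _
    positivity
  have hCbr : 2 ^ ((1:ℝ)/2) * (2 * (2 + |cT₂|) ^ ((1:ℝ)/2) * (4*π)⁻¹) ^ P * FF P N₀ ≤ C := by
    rw [hCdef]
    linarith
  calc Δ * (M + Δ) ^ ((1:ℝ)/2) * (2 * (M + Δ + c) ^ ((1:ℝ)/2) * |σ|⁻¹ * Δ⁻¹) ^ P * FF P N₀
      ≤ Δ * (2 ^ ((1:ℝ)/2) * M ^ ((1:ℝ)/2)) * β' ^ P * FF P N₀ := by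
        apply mul_le_mul_of_nonneg_right _ hFF0
        have hx1 : (0:ℝ) ≤ Δ * (M + Δ) ^ ((1:ℝ)/2) :=
          mul_nonneg hΔ.le (Real.rpow_nonneg (by linarith) _)
        apply mul_le_mul
        · exact mul_le_mul_of_nonneg_left h1 hΔ.le
        · exact hpowβ
        · exact pow_nonneg hβ0 P
        · have : (0:ℝ) ≤ M ^ ((1:ℝ)/2) := Real.rpow_nonneg hMpos.le _
          have h20 : (0:ℝ) ≤ 2 ^ ((1:ℝ)/2) := Real.rpow_nonneg (by norm_num) _
          positivity
    _ = (2 ^ ((1:ℝ)/2) * (2 * (2 + |cT₂|) ^ ((1:ℝ)/2) * (4*π)⁻¹) ^ P * FF P N₀) *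
        (k ^ P * (|d|⁻¹) ^ P * (Δ * (Δ⁻¹) ^ P) * ((M ^ ((1:ℝ)/2)) ^ P * M ^ ((1:ℝ)/2))) := by
        rw [hβ'def, mul_pow, mul_pow, mul_pow, mul_pow]
        ring
    _ ≤ C * (k ^ P * (|d|⁻¹) ^ P * (Δ * (Δ⁻¹) ^ P) * ((M ^ ((1:ℝ)/2)) ^ P * M ^ ((1:ℝ)/2))) :=
        mul_le_mul_of_nonneg_right hCbr hprod0
    _ = C * k ^ P * (|d|⁻¹) ^ P * (Δ * (Δ⁻¹) ^ P) * ((M ^ ((1:ℝ)/2)) ^ P * M ^ ((1:ℝ)/2)) := by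
        ring

end
end
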